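/- The map b₈ sending (a b; c d) ∈ Γ₀(2) ∩ Γ⁰(2) to e^{2πi·bd/8} is a group homomorphism from Γ₀(2)∩Γ⁰(2) to ℂˣ. Likewise c₈ : (a b; c d) ↦ e^{−2πi·cd/8} is a homomorphism on the same group. -/
import Mathlib


open Complex

/-- b₈(a b; c d) = e^{2πi·bd/8}. -/
noncomputable def b8 (γ : Matrix.SpecialLinearGroup (Fin 2) ℤ) : ℂ :=
  Complex.exp (2 * Real.pi * Complex.I * ((γ.1 0 1 * γ.1 1 1 : ℤ) : ℂ) / 8)

/-- c₈(a b; c d) = e^{−2πi·cd/8}. -/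
noncomputable def c8 (γ : Matrix.SpecialLinearGroup (Fin 2) ℤ) : ℂ :=
  Complex.exp (-(2 * Real.pi * Complex.I * ((γ.1 1 0 * γ.1 1 1 : ℤ) : ℂ) / 8))

lemma exp_eight (m n k : ℤ) (h : m = n + 8 * k) :
    Complex.exp (2 * Real.pi * Complex.I * (m : ℂ) / 8)
      = Complex.exp (2 * Real.pi * Complex.I * (n : ℂ) / 8) := by
  subst h
  push_cast
  rw [show (2 * (Real.pi : ℂ) * Complex.I * ((n : ℂ) + 8 * (k : ℂ)) / 8)
      = 2 * (Real.pi : ℂ) * Complex.I * (n : ℂ) / 8 + (k : ℂ) * (2 * Real.pi * Complex.I) by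
    ring]
  rw [Complex.exp_add, Complex.exp_int_mul_two_pi_mul_I, mul_one]

lemma exp_eight_neg (m n k : ℤ) (h : m = n + 8 * k) :
    Complex.exp (-(2 * Real.pi * Complex.I * (m : ℂ) / 8))
      = Complex.exp (-(2 * Real.pi * Complex.I * (n : ℂ) / 8)) := by
  subst h
  push_cast
  rw [show (-(2 * (Real.pi : ℂ) * Complex.I * ((n : ℂ) + 8 * (k : ℂ)) / 8))
      = -(2 * (Real.pi : ℂ) * Complex.I * (n : ℂ) / 8) + (-k : ℂ) * (2 * Real.pi * Complex.I) by
    ring]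
  rw [Complex.exp_add]
  have h1 : Complex.exp ((-(k : ℂ)) * (2 * Real.pi * Complex.I)) = 1 := by
    have := Complex.exp_int_mul_two_pi_mul_I (-k)
    push_cast at this
    exact this
  rw [h1, mul_one]

/-- b₈ and c₈ are homomorphisms Γ₀(2) ∩ Γ⁰(2) → ℂˣ. -/
theorem b8_c8_hom (γ γ' : Matrix.SpecialLinearGroup (Fin 2) ℤ)
    (hγc : (2 : ℤ) ∣ γ.1 1 0) (hγb : (2 : ℤ) ∣ γ.1 0 1)
    (hγ'c : (2 : ℤ) ∣ γ'.1 1 0) (hγ'b : (2 : ℤ) ∣ γ'.1 0 1) :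
    b8 (γ * γ') = b8 γ * b8 γ' ∧ c8 (γ * γ') = c8 γ * c8 γ' := by
  set a := γ.1 0 0 with ha
  set b := γ.1 0 1 with hb
  set c := γ.1 1 0 with hc
  set d := γ.1 1 1 with hd
  set a' := γ'.1 0 0 with ha'
  set b' := γ'.1 0 1 with hb'
  set c' := γ'.1 1 0 with hc'
  set d' := γ'.1 1 1 with hd'
  obtain ⟨b0, hb0⟩ := hγb
  obtain ⟨c0, hc0⟩ := hγc
  obtain ⟨b0', hb0'⟩ := hγ'b
  obtain ⟨c0', hc0'⟩ := hγ'c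
  have hdet : a * d - b * c = 1 := by
    have := γ.2
    rw [Matrix.det_fin_two] at this
    linarith [this]
  have hdet' : a' * d' - b' * c' = 1 := by
    have := γ'.2
    rw [Matrix.det_fin_two] at this
    linarith [this]
  -- d and d' are odd
  have hodd : Odd d := by
    have h1 : Odd (a * d) := ⟨2 * b0 * c0, by rw [hb0, hc0] at hdet; linarith⟩
    exact (Int.odd_mul.mp h1).2
  have hodd' : Odd d' := by
    have h1 : Odd (a' * d') := ⟨2 * b0' * c0', by rw [hb0', hc0'] at hdet'; linarith⟩
    exact (Int.odd_mul.mp h1).2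
  obtain ⟨e, he⟩ := hodd
  obtain ⟨e', he'⟩ := hodd'
  -- product entries
  have hB : (γ * γ').1 0 1 = a * b' + b * d' := by
    simp [Matrix.SpecialLinearGroup.coe_mul, Matrix.mul_apply, Fin.sum_univ_two,
      ← ha, ← hb, ← hb', ← hd']
  have hC : (γ * γ').1 1 0 = c * a' + d * c' := by
    simp [Matrix.SpecialLinearGroup.coe_mul, Matrix.mul_apply, Fin.sum_univ_two,
      ← hc, ← hd, ← ha', ← hc']
  have hD : (γ * γ').1 1 1 = c * b' + d * d' := by
    simp [Matrix.SpecialLinearGroup.coe_mul, Matrix.mul_apply, Fin.sum_univ_two,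
      ← hc, ← hd, ← hb', ← hd']
  have key1 : (a * b' + b * d') * (c * b' + d * d')
      = b * d + b' * d'
        + 8 * (a * c0 * b0' ^ 2 + 2 * b0 * c0 * b0' * d' + b0 * d * e' * (e' + 1)) := by
    rw [hb0, hc0] at hdet
    rw [hb0, hc0, hb0', he']
    linear_combination (2 * b0' * (2 * e' + 1)) * hdet
  have key2 : (c * a' + d * c') * (c * b' + d * d')
      = c * d + c' * d'
        + 8 * (c0 ^ 2 * a' * b0' + 2 * c0 * d * b0' * c0' + c0' * d' * e * (e + 1)) := by
    rw [hb0', hc0'] at hdet'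
    rw [hc0, hb0', hc0', he]
    linear_combination (2 * c0 * (2 * e + 1)) * hdet'
  constructor
  · rw [b8, b8, b8, ← Complex.exp_add, hB, hD]
    rw [show 2 * (Real.pi : ℂ) * Complex.I * ((b * d : ℤ) : ℂ) / 8
          + 2 * (Real.pi : ℂ) * Complex.I * ((b' * d' : ℤ) : ℂ) / 8
        = 2 * (Real.pi : ℂ) * Complex.I * (((b * d + b' * d' : ℤ)) : ℂ) / 8 by
      push_cast; ring]
    exact exp_eight _ _ _ key1
  · rw [c8, c8, c8, ← Complex.exp_add, hC, hD]
    rw [show -(2 * (Real.pi : ℂ) * Complex.I * ((c * d : ℤ) : ℂ) / 8)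
          + -(2 * (Real.pi : ℂ) * Complex.I * ((c' * d' : ℤ) : ℂ) / 8)
        = -(2 * (Real.pi : ℂ) * Complex.I * (((c * d + c' * d' : ℤ)) : ℂ) / 8) by
      push_cast; ring]
    exact exp_eight_neg _ _ _ key2
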